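/- arXiv:math/0505246 — 2 statements merged into one kernel-verified Lean document; each statement's English description precedes it below -/
import Mathlib

section
/- Let (X_i)_{i≥1} be i.i.d. real random variables with E[X_1] ∈ (−∞,0), so that T_1, h_1 and H_1 are a.s. well defined. Let M_∞ = sup_{n≥0} S_n and define G(z) = P(M_∞ > z) for z ∈ ℝ. Then for every x ≥ 0, P(M_∞ > x) = P(h_1 > x) + E[ 1_{{h_1 ≤ x}} · G(x + H_1) ]. -/
/-!
Since `S n → -∞` a.s. by the strong law of large numbers, `M_∞` is a.s. finite and `T_1 ≥ 1`, and
`h_1 ≤ M_∞`; hence `{M_∞ > x}` is, up to a null set, the disjoint union of `{h_1 > x}` and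
`{M_∞ > x, h_1 ≤ x}`. On `{h_1 ≤ x, T_1 = n}` the walk has stayed `≤ x` up to time `n`, so it
exceeds `x` iff the walk restarted at time `n`, `S (n + m) - S n`, exceeds `x - S n = x + H_1`.
The event `{h_1 ≤ x, T_1 = n}` and `S n` only depend on the walk stopped at `n`, i.e. on
`X 0, …, X (n - 1)`, while the restarted walk is independent of them and has the law of the whole
walk (simple Markov property). This gives
`P(M_∞ > x, h_1 ≤ x, T_1 = n) = E[1_{h_1 ≤ x, T_1 = n} G(x + H_1)]`; sum over `n`.
-/

open MeasureTheory ProbabilityTheory Filter Finset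
open scoped ENNReal

theorem Nat.sInf_setOf_eq_iff {p : ℕ → Prop} {n : ℕ} (hn : n ≠ 0) :
    sInf {k | p k} = n ↔ p n ∧ ∀ m < n, ¬ p m := by
  constructor
  · rintro rfl
    exact ⟨Nat.sInf_mem (Nat.nonempty_of_pos_sInf (Nat.pos_of_ne_zero hn)),
      fun m hm => Nat.notMem_of_lt_sInf hm⟩
  · rintro ⟨hpn, hlt⟩
    exact le_antisymm (Nat.sInf_le hpn)
      (not_lt.1 fun h => hlt _ h (Nat.sInf_mem ⟨n, hpn⟩))

theorem Nat.sInf_setOf_eq_congr {p q : ℕ → Prop} {n : ℕ} (hn : n ≠ 0)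
    (hpq : ∀ k ≤ n, p k ↔ q k) : sInf {k | p k} = n ↔ sInf {k | q k} = n := by
  rw [Nat.sInf_setOf_eq_iff hn, Nat.sInf_setOf_eq_iff hn, hpq n le_rfl]
  exact and_congr_right fun _ => forall₂_congr fun m hm => not_congr (hpq m hm.le)

theorem ciSup_fin_succ_le_iff {α : Type*} [ConditionallyCompleteLinearOrder α] {f : ℕ → α}
    {N : ℕ} {x : α} : ⨆ k : Fin (N + 1), f k ≤ x ↔ ∀ k ≤ N, f k ≤ x := by
  rw [ciSup_le_iff (Set.finite_range _).bddAbove]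
  exact ⟨fun h k hk => h ⟨k, by omega⟩, fun h k => h k (by omega)⟩

theorem sInf_setOf_lt_zero_ne_zero_of_tendsto_atBot {s : ℕ → ℝ} (hs : Tendsto s atTop atBot) :
    sInf {n | 1 ≤ n ∧ s n < 0} ≠ 0 := by
  obtain ⟨n, hn1, hn⟩ :=
    ((eventually_ge_atTop 1).and (hs.eventually (eventually_lt_atBot 0))).exists
  rw [Ne, Nat.sInf_eq_zero, not_or]
  exact ⟨fun h0 => absurd h0.1 (by norm_num), Set.nonempty_iff_ne_empty.1 ⟨n, hn1, hn⟩⟩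

/-- If `s` is unbounded above, both suprema are the junk value `0` and `0 ≤ x` makes both
sides false. -/
theorem Real.lt_iSup_iff_sub_lt_iSup_add {s : ℕ → ℝ} {x : ℝ} {n : ℕ} (hx : 0 ≤ x)
    (hs : ∀ k ≤ n, s k ≤ x) : x < ⨆ k, s k ↔ x - s n < ⨆ m, (s (n + m) - s n) := by
  by_cases hb : BddAbove (Set.range s)
  · have hb' : BddAbove (Set.range fun m => s (n + m) - s n) := by
      obtain ⟨b, hb⟩ := hb
      exact ⟨b - s n, by rintro _ ⟨m, rfl⟩; linarith [hb ⟨n + m, rfl⟩]⟩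
    rw [lt_ciSup_iff hb, lt_ciSup_iff hb']
    constructor
    · rintro ⟨k, hk⟩
      have hnk : n ≤ k := by
        by_contra! hkn
        linarith [hs k hkn.le]
      exact ⟨k - n, by rw [Nat.add_sub_cancel' hnk]; linarith⟩
    · rintro ⟨m, hm⟩
      exact ⟨n + m, by linarith⟩
  · have hb' : ¬ BddAbove (Set.range fun m => s (n + m) - s n) := by
      rintro ⟨b, hb'⟩
      refine hb ⟨max x (b + s n), ?_⟩
      rintro _ ⟨k, rfl⟩
      rcases le_or_gt k n with hkn | hnk
      · exact le_max_of_le_left (hs k hkn)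
      · have : s (n + (k - n)) - s n ≤ b := hb' ⟨k - n, rfl⟩
        rw [Nat.add_sub_cancel' hnk.le] at this
        exact le_max_of_le_right (by linarith)
    rw [Real.iSup_of_not_bddAbove hb, Real.iSup_of_not_bddAbove hb']
    constructor <;> intro h <;> linarith [hs n le_rfl]

namespace MeasureTheory

variable {Ω : Type*} {mΩ : MeasurableSpace Ω} {P : Measure Ω}

theorem measurable_sInf_setOf {p : ℕ → Ω → Prop} (hp : ∀ n, MeasurableSet {ω | p n ω}) :
    Measurable fun ω => sInf {n | p n ω} := by
  refine measurable_to_countable' fun n => ?_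
  rcases eq_or_ne n 0 with rfl | hn
  · have : (fun ω => sInf {n | p n ω}) ⁻¹' {0} = {ω | p 0 ω} ∪ ⋂ k, {ω | p k ω}ᶜ := by
      ext ω
      simp [Nat.sInf_eq_zero, Set.eq_empty_iff_forall_notMem]
    rw [this]
    exact (hp 0).union (.iInter fun k => (hp k).compl)
  · have : (fun ω => sInf {n | p n ω}) ⁻¹' {n} = {ω | p n ω} ∩ ⋂ m < n, {ω | p m ω}ᶜ := by
      ext ω
      simp [Nat.sInf_setOf_eq_iff hn]
    rw [this]
    exact (hp n).inter (.biInter (Set.to_countable _) fun m _ => (hp m).compl)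

theorem measurable_apply_index {ι β : Type*} [Countable ι] [MeasurableSpace ι]
    [MeasurableSingletonClass ι] [MeasurableSpace β] {F : ι → Ω → β} (hF : ∀ i, Measurable (F i))
    {T : Ω → ι} (hT : Measurable T) : Measurable fun ω => F (T ω) ω :=
  (measurable_from_prod_countable_left (f := fun p : Ω × ι => F p.2 p.1) hF).comp
    (measurable_id.prodMk hT)

theorem measurableSet_ciSup_fin_le {S : ℕ → Ω → ℝ} (hS : ∀ n, Measurable (S n)) {T : Ω → ℕ}
    (hT : Measurable T) (x : ℝ) : MeasurableSet {ω | ⨆ k : Fin (T ω + 1), S k ω ≤ x} := by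
  rw [show {ω | ⨆ k : Fin (T ω + 1), S k ω ≤ x} = {ω | ∀ k ≤ T ω, S k ω ≤ x} from
    Set.ext fun ω => ciSup_fin_succ_le_iff (f := (S · ω))]
  measurability

theorem measure_lt_eq_add_of_ae_le {α : Type*} [LinearOrder α] {f g : Ω → α} {x : α}
    (hfg : f ≤ᵐ[P] g) (hf : MeasurableSet {ω | f ω ≤ x}) :
    P {ω | x < g ω} = P {ω | x < f ω} + P ({ω | x < g ω} ∩ {ω | f ω ≤ x}) := by
  rw [← measure_inter_add_sdiff {ω | x < g ω} hf, add_comm]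
  congr 1
  refine measure_congr (eventuallyEq_set.2 ?_)
  filter_upwards [hfg] with ω hω
  simp only [Set.mem_sdiff, Set.mem_ofPred_eq, not_le]
  exact ⟨And.right, fun h => ⟨h.trans_le hω, h⟩⟩

theorem measure_inter_eq_setLIntegral_of_fiberwise {ι : Type*} [Countable ι]
    [MeasurableSpace ι] [MeasurableSingletonClass ι] {T : Ω → ι} (hT : Measurable T)
    {s A : Set Ω} (hs : MeasurableSet s) (hA : MeasurableSet A) {f : Ω → ℝ≥0∞}
    (hfiber : ∀ i, P (s ∩ (A ∩ T ⁻¹' {i})) = ∫⁻ ω in A ∩ T ⁻¹' {i}, f ω ∂P) :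
    P (s ∩ A) = ∫⁻ ω in A, f ω ∂P := by
  have hA_eq : A = ⋃ i, A ∩ T ⁻¹' {i} := by
    ext ω
    simp
  have hmeas : ∀ i, MeasurableSet (A ∩ T ⁻¹' {i}) := fun i => hA.inter (hT (.singleton i))
  have hdisj : Pairwise (Function.onFun Disjoint fun i => A ∩ T ⁻¹' {i}) := fun i j hij =>
    ((Set.disjoint_singleton.2 hij).preimage T).mono Set.inter_subset_right
      Set.inter_subset_right
  rw [hA_eq, Set.inter_iUnion, measure_iUnion (fun i j hij => (hdisj hij).mono
      Set.inter_subset_right Set.inter_subset_right) fun i => hs.inter (hmeas i),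
    lintegral_iUnion hmeas hdisj]
  exact tsum_congr hfiber

end MeasureTheory

namespace ProbabilityTheory

variable {ι Ω α β γ : Type*} {mΩ : MeasurableSpace Ω} {P : Measure Ω}
  [mα : MeasurableSpace α] [MeasurableSpace β] [MeasurableSpace γ]

theorem measurable_iSup₂_comap {X : ι → Ω → α} {I : Set ι} {i : ι} (hi : i ∈ I) :
    Measurable[⨆ j ∈ I, mα.comap (X j)] (X i) :=
  (comap_measurable (X i)).mono (le_iSup₂ (f := fun j (_ : j ∈ I) => mα.comap (X j)) i hi) le_rfl

theorem iIndepFun.indepFun_of_measurable_iSup₂ {X : ι → Ω → α} (h : iIndepFun X P)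
    (hX : ∀ i, Measurable (X i)) {I J : Set ι} (hIJ : Disjoint I J) {V : Ω → β} {W : Ω → γ}
    (hV : Measurable[⨆ i ∈ I, mα.comap (X i)] V) (hW : Measurable[⨆ j ∈ J, mα.comap (X j)] W) :
    IndepFun V W P := by
  rw [IndepFun_iff_Indep]
  exact indep_of_indep_of_le_right
    (indep_of_indep_of_le_left
      (indep_iSup_of_disjoint (fun i => (hX i).comap_le) h.iIndep hIJ) hV.comap_le) hW.comap_le

theorem iIndepFun.map_shift_eq {X : ℕ → Ω → α} (h : iIndepFun X P) (hX : ∀ i, Measurable (X i))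
    (hident : ∀ i, IdentDistrib (X i) (X 0) P P) (n : ℕ) :
    P.map (fun ω i => X (n + i) ω) = P.map (fun ω i => X i ω) := by
  rw [(h.precomp (add_right_injective n)).map_fun_eq_infinitePi_map (fun i => hX _),
    h.map_fun_eq_infinitePi_map hX]
  simp only [(hident _).map_eq]

theorem IndepFun.measure_preimage_inter_eq_setLIntegral [IsFiniteMeasure P] {V : Ω → α}
    {W : Ω → β} (hVW : IndepFun V W P) (hV : Measurable V) (hW : Measurable W) {B : Set α}
    (hB : MeasurableSet B) {C : α → Set β} (hC : MeasurableSet {p : α × β | p.2 ∈ C p.1}) :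
    P (V ⁻¹' B ∩ {ω | W ω ∈ C (V ω)}) = ∫⁻ ω in V ⁻¹' B, P.map W (C (V ω)) ∂P := by
  have hD : MeasurableSet (B ×ˢ Set.univ ∩ {p : α × β | p.2 ∈ C p.1}) :=
    (hB.prod .univ).inter hC
  calc P (V ⁻¹' B ∩ {ω | W ω ∈ C (V ω)})
      = P.map (fun ω => (V ω, W ω)) (B ×ˢ Set.univ ∩ {p | p.2 ∈ C p.1}) := by
        rw [Measure.map_apply (hV.prodMk hW) hD]
        congr 1 with ω
        simp
    _ = ∫⁻ a, P.map W (Prod.mk a ⁻¹' (B ×ˢ Set.univ ∩ {p | p.2 ∈ C p.1})) ∂P.map V := by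
        rw [(indepFun_iff_map_prod_eq_prod_map_map hV.aemeasurable hW.aemeasurable).1 hVW,
          Measure.prod_apply hD]
    _ = ∫⁻ a in B, P.map W (C a) ∂P.map V := by
        rw [← lintegral_indicator hB]
        refine lintegral_congr fun a => ?_
        by_cases ha : a ∈ B <;> simp [ha, Set.preimage]
    _ = ∫⁻ ω in V ⁻¹' B, P.map W (C (V ω)) ∂P :=
        setLIntegral_map hB (measurable_measure_prodMk_left hC) hV

theorem measurable_of_eq_sum_range {X : ℕ → Ω → ℝ} (hmeas : ∀ i, Measurable (X i))
    {S : ℕ → Ω → ℝ} (hS : ∀ n ω, S n ω = ∑ i ∈ range n, X i ω) (n : ℕ) : Measurable (S n) := by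
  rw [show S n = fun ω => ∑ i ∈ range n, X i ω from funext (hS n)]
  exact Finset.measurable_sum _ fun i _ => hmeas i

theorem measurable_of_eq_sInf {S : ℕ → Ω → ℝ} (hS : ∀ n, Measurable (S n)) {T : Ω → ℕ}
    (hT : ∀ ω, T ω = sInf {n | 1 ≤ n ∧ S n ω < 0}) : Measurable T := by
  rw [show T = _ from funext hT]
  exact measurable_sInf_setOf fun n => by measurability

theorem ae_tendsto_sum_range_atBot {X : ℕ → Ω → ℝ} (hint : Integrable (X 0) P)
    (hindep : Pairwise (Function.onFun (IndepFun · · P) X))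
    (hident : ∀ i, IdentDistrib (X i) (X 0) P P) (hmean : ∫ ω, X 0 ω ∂P < 0) :
    ∀ᵐ ω ∂P, Tendsto (fun n => ∑ i ∈ range n, X i ω) atTop atBot := by
  filter_upwards [strong_law_ae X hint hindep hident] with ω hω
  refine (tendsto_natCast_atTop_atTop.atTop_mul_neg hmean hω).congr' ?_
  filter_upwards [eventually_ne_atTop 0] with n hn
  simp [hn]

theorem measure_stopped_inter_sub_lt_iSup_eq_setLIntegral [IsProbabilityMeasure P]
    {X : ℕ → Ω → ℝ} (hmeas : ∀ i, Measurable (X i)) (hindep : iIndepFun X P)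
    (hident : ∀ i, IdentDistrib (X i) (X 0) P P) {S : ℕ → Ω → ℝ}
    (hS : ∀ n ω, S n ω = ∑ i ∈ range n, X i ω) (n : ℕ) {B : Set (ℕ → ℝ)}
    (hB : MeasurableSet B) (x : ℝ) :
    P ((fun ω k => S (min k n) ω) ⁻¹' B ∩ {ω | x - S n ω < ⨆ m, (S (n + m) ω - S n ω)}) =
      ∫⁻ ω in (fun ω k => S (min k n) ω) ⁻¹' B, P {ω' | x - S n ω < ⨆ m, S m ω'} ∂P := by
  set V : Ω → ℕ → ℝ := fun ω k => S (min k n) ω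
  set W : Ω → ℕ → ℝ := fun ω i => X (n + i) ω
  set C : (ℕ → ℝ) → Set (ℕ → ℝ) := fun s => {w | x - s n < ⨆ m, ∑ i ∈ range m, w i}
  have hV : Measurable[⨆ i ∈ Set.Iio n, MeasurableSpace.comap (X i) inferInstance] V := by
    -- the source σ-algebra is not the instance on `Ω`, hence the explicit `@`
    refine @measurable_pi_lambda _ _ _ (_) _ V fun k => ?_
    simp only [V, hS]
    exact Finset.measurable_sum _ fun i hi =>
      measurable_iSup₂_comap (by simp only [Finset.mem_range] at hi; simp; omega)
  have hW : Measurable[⨆ i ∈ Set.Ici n, MeasurableSpace.comap (X i) inferInstance] W :=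
    @measurable_pi_lambda _ _ _ (_) _ W fun i => measurable_iSup₂_comap (by simp)
  have hVW : IndepFun V W P :=
    hindep.indepFun_of_measurable_iSup₂ hmeas (Set.Iio_disjoint_Ici le_rfl) hV hW
  have hpsum : Measurable fun w : ℕ → ℝ => ⨆ m, ∑ i ∈ range m, w i :=
    .iSup fun m => Finset.measurable_sum _ fun i _ => measurable_pi_apply i
  have hC : MeasurableSet {p : (ℕ → ℝ) × (ℕ → ℝ) | p.2 ∈ C p.1} :=
    measurableSet_lt (measurable_const.sub ((measurable_pi_apply n).comp measurable_fst))
      (hpsum.comp measurable_snd)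
  have hlaw : ∀ s, P.map W (C s) = P {ω' | x - s n < ⨆ m, S m ω'} := by
    intro s
    rw [hindep.map_shift_eq hmeas hident n,
      Measure.map_apply (measurable_pi_lambda _ hmeas) (measurableSet_lt measurable_const hpsum)]
    simp [hS]
  have hshift : ∀ ω, W ω ∈ C (V ω) ↔ x - S n ω < ⨆ m, (S (n + m) ω - S n ω) := by
    intro ω
    simp [C, V, W, hS, Finset.sum_range_add]
  have hmarkov := hVW.measure_preimage_inter_eq_setLIntegral
    (hV.mono (iSup₂_le fun i _ => (hmeas i).comap_le) le_rfl)
    (hW.mono (iSup₂_le fun i _ => (hmeas i).comap_le) le_rfl) hB hC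
  simpa only [hlaw, hshift, V, min_self] using hmarkov

theorem measure_lt_iSup_inter_fiber_eq_setLIntegral [IsProbabilityMeasure P] {X : ℕ → Ω → ℝ}
    (hmeas : ∀ i, Measurable (X i)) (hindep : iIndepFun X P)
    (hident : ∀ i, IdentDistrib (X i) (X 0) P P) {S : ℕ → Ω → ℝ}
    (hS : ∀ n ω, S n ω = ∑ i ∈ range n, X i ω) {T : Ω → ℕ}
    (hT : ∀ ω, T ω = sInf {n | 1 ≤ n ∧ S n ω < 0}) {x : ℝ} (hx : 0 ≤ x) {n : ℕ} (hn : n ≠ 0) :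
    P ({ω | x < ⨆ k, S k ω} ∩ ({ω | ⨆ k : Fin (T ω + 1), S k ω ≤ x} ∩ T ⁻¹' {n})) =
      ∫⁻ ω in {ω | ⨆ k : Fin (T ω + 1), S k ω ≤ x} ∩ T ⁻¹' {n},
        P {ω' | x - S (T ω) ω < ⨆ k, S k ω'} ∂P := by
  set B : Set (ℕ → ℝ) := {s | (∀ k ≤ n, s k ≤ x) ∧ sInf {k | 1 ≤ k ∧ s k < 0} = n}
  have hB : MeasurableSet B := by
    have := measurable_sInf_setOf fun k => (by measurability :
      MeasurableSet {s : ℕ → ℝ | 1 ≤ k ∧ s k < 0})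
    exact measurableSet_setOfPred.2 (by fun_prop)
  have hfiber : (fun ω k => S (min k n) ω) ⁻¹' B =
      {ω | ⨆ k : Fin (T ω + 1), S k ω ≤ x} ∩ T ⁻¹' {n} := by
    ext ω
    have hTn : T ω = n ↔ sInf {k | 1 ≤ k ∧ S (min k n) ω < 0} = n := by
      rw [hT]
      exact Nat.sInf_setOf_eq_congr hn fun k hk => by rw [min_eq_left hk]
    simp only [B, Set.mem_preimage, Set.mem_inter_iff, Set.mem_ofPred_eq, Set.mem_singleton_iff,
      ← hTn]
    refine and_congr_left fun hTn => Iff.trans ?_ (ciSup_fin_succ_le_iff (f := (S · ω))).symm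
    rw [hTn]
    exact forall₂_congr fun k hk => by rw [min_eq_left hk]
  have hshift : ∀ ω ∈ {ω | ⨆ k : Fin (T ω + 1), S k ω ≤ x} ∩ T ⁻¹' {n},
      x < ⨆ k, S k ω ↔ x - S n ω < ⨆ m, (S (n + m) ω - S n ω) := by
    rintro ω ⟨hle, hTn⟩
    rw [Set.mem_preimage, Set.mem_singleton_iff] at hTn
    have hle' := (ciSup_fin_succ_le_iff (f := (S · ω))).1 hle
    rw [hTn] at hle'
    exact Real.lt_iSup_iff_sub_lt_iSup_add hx hle'
  have hE : MeasurableSet ({ω | ⨆ k : Fin (T ω + 1), S k ω ≤ x} ∩ T ⁻¹' {n}) :=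
    hfiber ▸ hB.preimage
      (measurable_pi_lambda _ fun k => measurable_of_eq_sum_range hmeas hS (min k n))
  have hset : {ω | x < ⨆ k, S k ω} ∩ ({ω | ⨆ k : Fin (T ω + 1), S k ω ≤ x} ∩ T ⁻¹' {n}) =
      (fun ω k => S (min k n) ω) ⁻¹' B ∩ {ω | x - S n ω < ⨆ m, (S (n + m) ω - S n ω)} := by
    rw [hfiber, Set.inter_comm]
    ext ω
    exact and_congr_right (hshift ω)
  rw [hset, measure_stopped_inter_sub_lt_iSup_eq_setLIntegral hmeas hindep hident hS n hB x,
    hfiber]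
  refine setLIntegral_congr_fun hE fun ω hω => ?_
  rw [hω.2]

theorem measure_lt_iSup_inter_le_eq_setLIntegral [IsProbabilityMeasure P] {X : ℕ → Ω → ℝ}
    (hmeas : ∀ i, Measurable (X i)) (hindep : iIndepFun X P)
    (hident : ∀ i, IdentDistrib (X i) (X 0) P P) {S : ℕ → Ω → ℝ}
    (hS : ∀ n ω, S n ω = ∑ i ∈ range n, X i ω) {T : Ω → ℕ}
    (hT : ∀ ω, T ω = sInf {n | 1 ≤ n ∧ S n ω < 0}) (hT0 : ∀ᵐ ω ∂P, T ω ≠ 0) {x : ℝ}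
    (hx : 0 ≤ x) :
    P ({ω | x < ⨆ k, S k ω} ∩ {ω | ⨆ k : Fin (T ω + 1), S k ω ≤ x}) =
      ∫⁻ ω in {ω | ⨆ k : Fin (T ω + 1), S k ω ≤ x}, P {ω' | x - S (T ω) ω < ⨆ k, S k ω'} ∂P := by
  have hSm := measurable_of_eq_sum_range hmeas hS
  have hTm := measurable_of_eq_sInf hSm hT
  have hnull : P (T ⁻¹' {0}) = 0 :=
    measure_mono_null (fun ω (h : T ω = 0) => not_not.2 h) (ae_iff.1 hT0)
  refine measure_inter_eq_setLIntegral_of_fiberwise hTm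
    (measurableSet_lt measurable_const (.iSup hSm)) (measurableSet_ciSup_fin_le hSm hTm x)
    fun n => ?_
  rcases eq_or_ne n 0 with rfl | hn
  · rw [setLIntegral_measure_zero _ _ (measure_mono_null Set.inter_subset_right hnull)]
    exact measure_mono_null (Set.inter_subset_right.trans Set.inter_subset_right) hnull
  · exact measure_lt_iSup_inter_fiber_eq_setLIntegral hmeas hindep hident hS hT hx hn

end ProbabilityTheory

/-- Iglehart's identity: for a random walk with finite negative mean, with `M_∞` the all-time
maximum, `h_1` the height of the first excursion above the minimum, `H_1` the first strict
descending ladder height and `G(z) = P(M_∞ > z)`, one has, for every `x ≥ 0`,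
`P(M_∞ > x) = P(h_1 > x) + E[1_{h_1 ≤ x} G(x + H_1)]`. -/
theorem iglehart_identity
    {Ω : Type*} [MeasurableSpace Ω] (P : Measure Ω) [IsProbabilityMeasure P]
    (X : ℕ → Ω → ℝ)
    (hmeas : ∀ i, Measurable (X i))
    (hindep : iIndepFun X P)
    (hident : ∀ i, IdentDistrib (X i) (X 0) P P)
    (hint : Integrable (X 0) P)
    (hmean : ∫ ω, X 0 ω ∂P < 0)
    (S : ℕ → Ω → ℝ) (hS : ∀ n ω, S n ω = ∑ i ∈ Finset.range n, X i ω)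
    (T : Ω → ℕ) (hT : ∀ ω, T ω = sInf {n | 1 ≤ n ∧ S n ω < 0})
    (H : Ω → ℝ) (hH : ∀ ω, H ω = -(S (T ω) ω))
    (h1 : Ω → ℝ) (hh1 : ∀ ω, h1 ω = ⨆ n : Fin (T ω + 1), S n.1 ω)
    (M : Ω → ℝ) (hM : ∀ ω, M ω = ⨆ n : ℕ, S n ω)
    (G : ℝ → ℝ) (hG : ∀ z, G z = (P {ω | z < M ω}).toReal) :
    ∀ x : ℝ, 0 ≤ x →
      (P {ω | x < M ω}).toReal =
        (P {ω | x < h1 ω}).toReal + ∫ ω in {ω | h1 ω ≤ x}, G (x + H ω) ∂P := by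
  intro x hx
  simp only [hM, hH, hh1, hG, ← sub_eq_add_neg]
  have hSm := measurable_of_eq_sum_range hmeas hS
  have hTm := measurable_of_eq_sInf hSm hT
  have hwalk : ∀ᵐ ω ∂P, Tendsto (S · ω) atTop atBot := by
    simpa only [← hS] using
      ae_tendsto_sum_range_atBot hint (fun i j hij => hindep.indepFun hij) hident hmean
  have hG_meas : Measurable fun ω => P {ω' | x - S (T ω) ω < ⨆ n, S n ω'} :=
    (Antitone.measurable (f := fun z => P {ω | z < ⨆ n, S n ω}) fun z z' hz =>
      measure_mono fun ω hω => hz.trans_lt hω).comp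
      (measurable_const.sub (measurable_apply_index hSm hTm))
  rw [measure_lt_eq_add_of_ae_le (hwalk.mono fun ω hω => ciSup_le fun (k : Fin (T ω + 1)) =>
      le_ciSup (bddAbove_range_of_tendsto_atTop_atBot hω) k.1)
      (measurableSet_ciSup_fin_le hSm hTm x),
    measure_lt_iSup_inter_le_eq_setLIntegral hmeas hindep hident hS hT
      (hwalk.mono fun ω hω => hT ω ▸ sInf_setOf_lt_zero_ne_zero_of_tendsto_atBot hω) hx,
    integral_toReal hG_meas.aemeasurable (ae_of_all _ fun _ => measure_lt_top _ _),
    ENNReal.toReal_add (measure_ne_top _ _)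
      ((lintegral_mono fun _ => prob_le_one).trans_lt (by simp)).ne]
end

section
/- Let μ be a probability measure on [0,∞) and U = Σ_{n=0}^∞ μ^{*n} its renewal measure. Then for all x ≥ 0 and h ≥ 0, U((x, x+h]) ≤ U([0, h]). -/
/-!
Let `U_N = ∑_{n<N} μ^{*n}`, so that `U_{N+1} = δ₀ + U_N ∗ μ`. For `x ≥ 0` the atom at `0` misses
`(x, x+h]`, and after a first step `y` the window becomes `(x-y, x-y+h]`. If `x - y ≥ 0`, induction
on `N` bounds its `U_N`-mass by `U_N [0, h]`; otherwise the window lies in `(-∞, 0) ∪ [0, h]` and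
`U_N` has no mass below `0`. Integrating against `μ` (mass `≤ 1`) gives
`U_{N+1} (x, x+h] ≤ U_N [0, h]`, and `N → ∞` gives the bound for `U`.
-/

open MeasureTheory

namespace MeasureTheory.Measure

lemma sFinite_finsetSum {α ι : Type*} [MeasurableSpace α] (s : Finset ι) (m : ι → Measure α)
    [∀ i, SFinite (m i)] : SFinite (∑ i ∈ s, m i) := by
  rw [← sum_coe_finset]
  infer_instance

variable {M : Type*} [AddMonoid M] [MeasurableSpace M] [MeasurableAdd₂ M]

lemma sum_conv {ι : Type*} (m : ι → Measure M) (μ : Measure M) [SFinite μ] :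
    Measure.sum m ∗ μ = Measure.sum (fun i ↦ m i ∗ μ) := by
  rw [Measure.conv, prod_sum_left, map_sum measurable_add.aemeasurable]
  rfl

lemma finsetSum_conv {ι : Type*} (s : Finset ι) (m : ι → Measure M) (μ : Measure M) [SFinite μ] :
    (∑ i ∈ s, m i) ∗ μ = ∑ i ∈ s, m i ∗ μ := by
  simp only [← sum_coe_finset, sum_conv]

lemma conv_apply_eq_lintegral (ν μ : Measure M) [SFinite ν] [SFinite μ] {s : Set M}
    (hs : MeasurableSet s) : (ν ∗ μ) s = ∫⁻ y, ν ((· + y) ⁻¹' s) ∂μ := by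
  rw [Measure.conv, map_apply (by fun_prop) hs, prod_apply_symm (hs.preimage (by fun_prop))]
  rfl

end MeasureTheory.Measure

open Set

section HalfLine

variable {ν μ : Measure ℝ}

lemma conv_Iio_zero_eq_zero [SFinite ν] [SFinite μ] (hν : ν (Iio 0) = 0)
    (hμ : μ (Iio 0) = 0) : (ν ∗ μ) (Iio 0) = 0 := by
  rw [Measure.conv_apply_eq_lintegral _ _ measurableSet_Iio]
  refine (lintegral_congr_ae ?_).trans lintegral_zero
  filter_upwards [measure_eq_zero_iff_ae_notMem.1 hμ] with y hy
  refine measure_mono_null (fun z hz ↦ ?_) hν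
  simp only [mem_Iio, not_lt, mem_preimage] at hy hz ⊢
  linarith

lemma measure_Ioc_le_Icc_of_nonpos (hν : ν (Iio 0) = 0) {x : ℝ} (hx : x ≤ 0) (h : ℝ) :
    ν (Ioc x (x + h)) ≤ ν (Icc 0 h) :=
  calc ν (Ioc x (x + h)) ≤ ν (Iio 0 ∪ Icc 0 h) := by
        refine measure_mono fun z hz ↦ ?_
        rcases lt_or_ge z 0 with hz0 | hz0
        · exact Or.inl hz0
        · exact Or.inr ⟨hz0, by linarith [hz.2]⟩
    _ ≤ ν (Iio 0) + ν (Icc 0 h) := measure_union_le _ _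
    _ = ν (Icc 0 h) := by rw [hν, zero_add]

lemma conv_Ioc_le_Icc [SFinite ν] [SFinite μ] (hμ : μ univ ≤ 1) {h : ℝ} (hν₀ : ν (Iio 0) = 0)
    (hν : ∀ x, 0 ≤ x → ν (Ioc x (x + h)) ≤ ν (Icc 0 h)) (x : ℝ) :
    (ν ∗ μ) (Ioc x (x + h)) ≤ ν (Icc 0 h) := by
  rw [Measure.conv_apply_eq_lintegral _ _ measurableSet_Ioc]
  calc ∫⁻ y, ν ((· + y) ⁻¹' Ioc x (x + h)) ∂μ ≤ ∫⁻ _, ν (Icc 0 h) ∂μ := by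
        refine lintegral_mono fun y ↦ ?_
        rw [preimage_add_const_Ioc, ← sub_add_eq_add_sub]
        rcases le_total 0 (x - y) with hxy | hxy
        · exact hν _ hxy
        · exact measure_Ioc_le_Icc_of_nonpos hν₀ hxy h
    _ = ν (Icc 0 h) * μ univ := lintegral_const _
    _ ≤ ν (Icc 0 h) := mul_le_of_le_one_right' hμ

end HalfLine

section Renewal

variable {μ : Measure ℝ} {μpow : ℕ → Measure ℝ}

lemma sFinite_convPow [SFinite μ] (hpow0 : μpow 0 = Measure.dirac 0)
    (hpowsucc : ∀ n, μpow (n + 1) = μpow n ∗ μ) (n : ℕ) : SFinite (μpow n) := by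
  induction n with
  | zero => rw [hpow0]; infer_instance
  | succ n ih => rw [hpowsucc]; infer_instance

lemma convPow_Iio_zero [SFinite μ] (hμ : μ (Iio 0) = 0) (hpow0 : μpow 0 = Measure.dirac 0)
    (hpowsucc : ∀ n, μpow (n + 1) = μpow n ∗ μ) (n : ℕ) : μpow n (Iio 0) = 0 := by
  induction n with
  | zero => simp [hpow0]
  | succ n ih =>
    have := sFinite_convPow hpow0 hpowsucc n
    rw [hpowsucc]
    exact conv_Iio_zero_eq_zero ih hμ

lemma sum_range_convPow_Ioc_le [SFinite μ] (hμ₁ : μ univ ≤ 1) (hμ : μ (Iio 0) = 0)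
    (hpow0 : μpow 0 = Measure.dirac 0) (hpowsucc : ∀ n, μpow (n + 1) = μpow n ∗ μ)
    (h : ℝ) (N : ℕ) {x : ℝ} (hx : 0 ≤ x) :
    ∑ n ∈ Finset.range N, μpow n (Ioc x (x + h)) ≤ ∑ n ∈ Finset.range N, μpow n (Icc 0 h) := by
  induction N generalizing x with
  | zero => simp
  | succ N ih =>
    have := sFinite_convPow hpow0 hpowsucc
    have := Measure.sFinite_finsetSum (Finset.range N) μpow
    set U := ∑ n ∈ Finset.range N, μpow n
    have hU_apply (s : Set ℝ) : U s = ∑ n ∈ Finset.range N, μpow n s :=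
      Measure.finsetSum_apply _ _ _
    have hU₀ : U (Iio 0) = 0 := by
      simp [hU_apply, convPow_Iio_zero hμ hpow0 hpowsucc]
    calc ∑ n ∈ Finset.range (N + 1), μpow n (Ioc x (x + h)) = (U ∗ μ) (Ioc x (x + h)) := by
          rw [Finset.sum_range_succ', hpow0, Measure.dirac_apply' _ measurableSet_Ioc,
            indicator_of_notMem fun h0 ↦ hx.not_gt h0.1, add_zero, Measure.finsetSum_conv,
            Measure.finsetSum_apply]
          simp only [hpowsucc]
      _ ≤ U (Icc 0 h) := conv_Ioc_le_Icc hμ₁ hU₀ (fun y hy ↦ by simpa only [hU_apply] using ih hy) x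
      _ ≤ ∑ n ∈ Finset.range (N + 1), μpow n (Icc 0 h) := by
          rw [hU_apply, Finset.sum_range_succ]
          exact le_self_add

end Renewal

/-- Subadditivity-type bound for a renewal measure: if `μ` is a probability measure on
`[0,∞)` and `U = Σ_{n≥0} μ^{*n}` is its renewal measure, then for all `x ≥ 0` and `h ≥ 0`,
`U((x, x+h]) ≤ U([0, h])`. -/
theorem renewal_measure_interval_bound
    (μ : Measure ℝ) [IsProbabilityMeasure μ]
    (hsupp : μ (Set.Iio 0) = 0)
    (μpow : ℕ → Measure ℝ)
    (hpow0 : μpow 0 = Measure.dirac 0)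
    (hpowsucc : ∀ n, μpow (n + 1) = (μpow n).conv μ)
    (U : Measure ℝ) (hU : U = Measure.sum μpow) :
    ∀ x : ℝ, 0 ≤ x → ∀ h : ℝ, 0 ≤ h →
      U (Set.Ioc x (x + h)) ≤ U (Set.Icc 0 h) := by
  intro x hx h _
  rw [hU, Measure.sum_apply _ measurableSet_Ioc, Measure.sum_apply _ measurableSet_Icc,
    ENNReal.tsum_eq_iSup_nat, ENNReal.tsum_eq_iSup_nat]
  exact iSup_mono fun N ↦ sum_range_convPow_Ioc_le prob_le_one hsupp hpow0 hpowsucc h N hx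
end
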